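/- Define Ω₋₊₊(ξ) = (√3/4) - ω(ξ) + ω(ξ - √3), where ω(ξ) = ξ/(1+ξ²). Then Ω₋₊₊(ξ) = 0 if and only if ξ = 0 or ξ = √3, and Ω₋₊₊(ξ) → √3/4 as |ξ| → ∞. -/

import Mathlib

noncomputable def ω : ℝ → ℝ := fun ξ => ξ / (1 + ξ^2)

noncomputable def Ω (ξ : ℝ) : ℝ := Real.sqrt 3 / 4 - ω ξ + ω (ξ - Real.sqrt 3)

/-!
Clearing the positive denominators, `4 (1 + ξ²)(1 + (ξ - √3)²) Ω(ξ)` factors as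
`ξ (ξ - √3) (√3 ξ² - 3ξ + 6√3)`, and the quadratic factor has negative discriminant `9 - 72`.
The limit holds because `|ω ξ| ≤ 1/|ξ|`, so `ω` vanishes at infinity, and so does its translate.
-/

open Filter Topology

lemma abs_omega_le_inv_abs (ξ : ℝ) : |ω ξ| ≤ |ξ|⁻¹ := by
  rcases eq_or_ne ξ 0 with rfl | hξ
  · simp [ω]
  have hξ' : 0 < |ξ| := abs_pos.mpr hξ
  have hden : (0 : ℝ) < 1 + ξ ^ 2 := by positivity
  rw [ω, abs_div, abs_of_pos hden, div_le_iff₀ hden]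
  calc |ξ| ≤ |ξ|⁻¹ + |ξ| := le_add_of_nonneg_left (inv_pos.mpr hξ').le
    _ = |ξ|⁻¹ * (1 + ξ ^ 2) := by rw [← sq_abs]; field_simp

lemma tendsto_omega_cocompact : Tendsto ω (cocompact ℝ) (𝓝 0) :=
  squeeze_zero_norm abs_omega_le_inv_abs <|
    tendsto_inv_atTop_zero.comp tendsto_norm_cocompact_atTop

lemma tendsto_Omega_cocompact : Tendsto Ω (cocompact ℝ) (𝓝 (Real.sqrt 3 / 4)) := by
  have hshift : Tendsto (· - Real.sqrt 3) (cocompact ℝ) (cocompact ℝ) :=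
    (Homeomorph.subRight (Real.sqrt 3)).map_cocompact.le
  have h := ((tendsto_const_nhds (x := Real.sqrt 3 / 4)).sub tendsto_omega_cocompact).add
    (tendsto_omega_cocompact.comp hshift)
  rwa [sub_zero, add_zero] at h

lemma Omega_mul_denom (ξ : ℝ) :
    Ω ξ * (4 * (1 + ξ ^ 2) * (1 + (ξ - Real.sqrt 3) ^ 2)) =
      ξ * (ξ - Real.sqrt 3) * (Real.sqrt 3 * ξ ^ 2 - 3 * ξ + 6 * Real.sqrt 3) := by
  have hs : Real.sqrt 3 ^ 2 = 3 := Real.sq_sqrt (by norm_num)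
  simp only [Ω, ω]
  field_simp
  linear_combination (Real.sqrt 3 + ξ ^ 2 * Real.sqrt 3 - ξ ^ 3) * hs

lemma sqrt_three_quadratic_pos (ξ : ℝ) : 0 < Real.sqrt 3 * ξ ^ 2 - 3 * ξ + 6 * Real.sqrt 3 := by
  have hs : Real.sqrt 3 ^ 2 = 3 := Real.sq_sqrt (by norm_num)
  have hs0 : 0 < Real.sqrt 3 := by positivity
  nlinarith [sq_nonneg (2 * Real.sqrt 3 * ξ - 3)]

lemma Omega_eq_zero_iff (ξ : ℝ) : Ω ξ = 0 ↔ ξ = 0 ∨ ξ = Real.sqrt 3 := by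
  have hdenom : 4 * (1 + ξ ^ 2) * (1 + (ξ - Real.sqrt 3) ^ 2) ≠ 0 := by positivity
  rw [← mul_eq_zero_iff_right hdenom, Omega_mul_denom,
    mul_eq_zero_iff_right (sqrt_three_quadratic_pos ξ).ne', mul_eq_zero, sub_eq_zero]

theorem bbm_Omega_zeros_and_limit :
    (∀ ξ : ℝ, Ω ξ = 0 ↔ ξ = 0 ∨ ξ = Real.sqrt 3) ∧
    Filter.Tendsto Ω Filter.atTop (nhds (Real.sqrt 3 / 4)) ∧
    Filter.Tendsto Ω Filter.atBot (nhds (Real.sqrt 3 / 4)) :=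
  ⟨Omega_eq_zero_iff, tendsto_Omega_cocompact.mono_left atTop_le_cocompact,
    tendsto_Omega_cocompact.mono_left atBot_le_cocompact⟩
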